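/- Let μ, ν be finite symmetric Borel measures on ℝ with continuous/atomic decompositions μ = μ_c + μ_a and ν = ν_c + ν_a, satisfying μ_c ∗ μ_c ≺ μ_c, ν_c ∗ ν_c ≺ ν_c, μ_a ≠ 0, ν_a ≠ 0. Let Λ(μ_a) and Λ(ν_a) be the subgroups of ℝ generated by the atoms of μ_a and ν_a respectively, and δ_{Λ(μ_a)}, δ_{Λ(ν_a)} finite atomic measures with those atom sets. If the joint measure classes of (μ^{∗k})_{k≥1} and (ν^{∗k})_{k≥1} coincide, then Λ(μ_a) = Λ(ν_a) and the measure classes of μ_c ∗ δ_{Λ(μ_a)} and ν_c ∗ δ_{Λ(ν_a)} coincide. -/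

import Mathlib

/-!
The joint measure class of the powers `μ^{∗k}`, `k ≥ 1`, is the class of the single measure
`∑ₖ μ^{∗(k+1)}`, and it coincides with the class of `μc ∗ δ + δ = (μc + δ₀) ∗ δ`. That measure
dominates `μ`, since `δ` charges `0` and every atom of `μa`, and its class is closed under
convolution, as those of `μc + δ₀` and of `δ` are; so it dominates every power. Conversely, by
symmetry `Λ` is the monoid generated by the atoms of `μ`, so every point of `Λ` is an atom of some
power, and the translate of `μc` by that point is dominated by the next power.

In `μc ∗ δ + δ` the first summand has no atoms and the second is purely atomic with atom set `Λ`,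
so the class determines `Λ` and, `Λ` being countable, also the class of `μc ∗ δ`.
-/

open MeasureTheory Set

noncomputable def convPow (μ : MeasureTheory.Measure ℝ) : ℕ → MeasureTheory.Measure ℝ
  | 0 => MeasureTheory.Measure.dirac 0
  | n + 1 => (convPow μ n).conv μ

namespace MeasureTheory.Measure

section Atoms

variable {α : Type*} [MeasurableSpace α]

theorem countable_setOf_singleton_pos [MeasurableSingletonClass α] (μ : Measure α) [SFinite μ] :
    {x | 0 < μ {x}}.Countable :=
  countable_meas_pos_of_disjoint_iUnion measurableSet_singleton
    fun _ _ h ↦ disjoint_singleton.2 h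

theorem exists_singleton_pos_of_ne_zero {μ : Measure α} (hμ : μ ≠ 0)
    (hμ_atomic : μ {x | 0 < μ {x}}ᶜ = 0) : ∃ x, 0 < μ {x} := by
  by_contra! h
  simp_all [nonpos_iff_eq_zero]

theorem disjoint_of_forall_singleton_pos {μ : Measure α} {S U : Set α}
    (hS : ∀ x ∈ S, 0 < μ {x}) (hU : μ U = 0) : Disjoint U S :=
  disjoint_right.2 fun x hx hxU ↦
    (hS x hx).ne' (measure_mono_null (singleton_subset_iff.2 hxU) hU)

theorem absolutelyContinuous_of_forall_singleton_pos {μ ν : Measure α} {S : Set α}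
    (hμ : μ Sᶜ = 0) (hν : ∀ x ∈ S, 0 < ν {x}) : μ ≪ ν := fun _ hU ↦
  measure_mono_null (disjoint_of_forall_singleton_pos hν hU).subset_compl_right hμ

theorem dirac_absolutelyContinuous_of_singleton_pos [MeasurableSingletonClass α]
    {μ : Measure α} {x : α} (hx : 0 < μ {x}) : dirac x ≪ μ :=
  absolutelyContinuous_of_forall_singleton_pos (S := {x}) (by simp) (by simpa using hx)

theorem singleton_pos_iff_of_add_absolutelyContinuous_add {c₁ d₁ c₂ d₂ : Measure α}
    [NullSingletonClass c₁] [NullSingletonClass c₂] (h₁ : c₁ + d₁ ≪ c₂ + d₂)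
    (h₂ : c₂ + d₂ ≪ c₁ + d₁) (x : α) : 0 < d₁ {x} ↔ 0 < d₂ {x} := by
  have pos_mono {ρ σ : Measure α} (h : ρ ≪ σ) (hx : 0 < ρ {x}) : 0 < σ {x} :=
    pos_iff_ne_zero.2 fun h0 ↦ hx.ne' (h h0)
  have h : 0 < (c₁ + d₁) {x} ↔ 0 < (c₂ + d₂) {x} := ⟨pos_mono h₁, pos_mono h₂⟩
  simpa using h

theorem absolutelyContinuous_of_add_absolutelyContinuous_add [MeasurableSingletonClass α]
    {c₁ d₁ c₂ d₂ : Measure α} [NullSingletonClass c₁] [SFinite d₂]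
    (hd₂ : d₂ {x | 0 < d₂ {x}}ᶜ = 0) (h : c₁ + d₁ ≪ c₂ + d₂) : c₁ ≪ c₂ := by
  refine AbsolutelyContinuous.mk fun U _ hc₂U ↦ ?_
  set S := {x | 0 < d₂ {x}}
  have hoff : c₁ (U \ S) = 0 := by
    have : (c₂ + d₂) (U \ S) = 0 := by
      rw [add_apply, measure_mono_null sdiff_subset hc₂U,
        measure_mono_null (sdiff_subset_compl U S) hd₂, add_zero]
    exact (add_eq_zero.1 (h this)).1
  exact measure_mono_null (subset_sdiff_union U S)
    (measure_union_null hoff ((countable_setOf_singleton_pos d₂).measure_zero c₁))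

end Atoms

section Conv

variable {M : Type*} [AddMonoid M] [MeasurableSpace M] [MeasurableAdd₂ M]

theorem conv_mono {μ μ' ν ν' : Measure M} [SFinite ν'] (hμ : μ ≤ μ') (hν : ν ≤ ν') :
    μ ∗ ν ≤ μ' ∗ ν' :=
  map_mono (prod_mono hμ hν) measurable_add

theorem AbsolutelyContinuous.conv {μ μ' ν ν' : Measure M} [SFinite ν'] (hμ : μ ≪ μ')
    (hν : ν ≪ ν') : μ ∗ ν ≪ μ' ∗ ν' :=
  (hμ.prod hν).map measurable_add

theorem add_dirac_zero_conv (μ ν : Measure M) [SFinite μ] [SFinite ν] :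
    (μ + dirac 0) ∗ ν = μ ∗ ν + ν := by
  rw [add_conv, dirac_zero_conv]

theorem mul_le_conv_singleton_add [MeasurableSingletonClass M] (μ ν : Measure M) [SFinite ν]
    (x y : M) : μ {x} * ν {y} ≤ (μ ∗ ν) {x + y} := by
  rw [conv, map_apply measurable_add (measurableSet_singleton _), ← prod_prod]
  exact measure_mono fun p hp ↦ by simp_all

theorem absolutelyContinuous_conv_of_singleton_zero_ne_zero (μ ν : Measure M) [SFinite μ]
    [SFinite ν] (hν : ν {0} ≠ 0) : μ ≪ μ ∗ ν := by
  have hle : μ ∗ (ν {0} • dirac 0) ≤ μ ∗ ν := by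
    rw [← restrict_singleton]
    exact conv_mono le_rfl restrict_le_self
  rw [conv_smul_right, conv_dirac_zero] at hle
  exact (absolutelyContinuous_smul hν).trans (absolutelyContinuous_of_le hle)

theorem conv_absolutelyContinuous_of_forall_conv_dirac {μ ν ρ : Measure M} [SFinite μ]
    [SFinite ν] {S : Set M} (hν : ν Sᶜ = 0) (h : ∀ x ∈ S, μ ∗ dirac x ≪ ρ) : μ ∗ ν ≪ ρ := by
  refine AbsolutelyContinuous.mk fun U hU hρU ↦ ?_
  rw [conv, map_apply measurable_add hU, prod_apply_symm (measurable_add hU)]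
  refine (lintegral_congr_ae ?_).trans lintegral_zero
  filter_upwards [measure_eq_zero_iff_ae_notMem.1 hν] with x hx
  have := h x (not_not.1 hx) hρU
  rwa [conv_dirac, map_apply (measurable_add_const x) hU] at this

theorem conv_apply_eq_zero_of_disjoint {μ ν : Measure M} [SFinite ν] (S : AddSubmonoid M)
    (hμ : μ (S : Set M)ᶜ = 0) (hν : ν (S : Set M)ᶜ = 0) {U : Set M} (hU : MeasurableSet U)
    (hUS : Disjoint U S) : (μ ∗ ν) U = 0 := by
  rw [conv, map_apply measurable_add hU]
  refine measure_mono_null (t := (S : Set M)ᶜ ×ˢ univ ∪ univ ×ˢ (S : Set M)ᶜ) ?_ ?_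
  · rintro ⟨x, y⟩ hxy
    by_contra! hxy'
    simp only [mem_union, mem_prod, mem_compl_iff, mem_univ, and_true, true_and, not_or,
      not_not] at hxy'
    exact disjoint_left.1 hUS hxy (S.add_mem hxy'.1 hxy'.2)
  · simp [prod_prod, hμ, hν]

theorem conv_self_absolutelyContinuous_of_forall_singleton_pos {μ : Measure M} [SFinite μ]
    (S : AddSubmonoid M) (hμS : μ (S : Set M)ᶜ = 0) (hμ : ∀ x ∈ S, 0 < μ {x}) : μ ∗ μ ≪ μ :=
  AbsolutelyContinuous.mk fun _ hU hμU ↦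
    conv_apply_eq_zero_of_disjoint S hμS hμS hU (disjoint_of_forall_singleton_pos hμ hμU)

theorem add_dirac_zero_conv_self_absolutelyContinuous {μ : Measure M} [SFinite μ]
    (hμ : μ ∗ μ ≪ μ) : (μ + dirac 0) ∗ (μ + dirac 0) ≪ μ + dirac 0 := by
  have hle : μ ≪ μ + dirac 0 := absolutelyContinuous_of_le (Measure.le_add_right le_rfl)
  rw [add_conv, conv_add, conv_dirac_zero, dirac_zero_conv]
  exact ((hμ.trans hle).add_left hle).add_left AbsolutelyContinuous.rfl

end Conv

instance nullSingletonClass_conv {M : Type*} [AddRightCancelMonoid M] [MeasurableSpace M]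
    [MeasurableAdd₂ M] [MeasurableSingletonClass M] (μ ν : Measure M) [SFinite μ] [SFinite ν]
    [NullSingletonClass μ] : NullSingletonClass (μ ∗ ν) where
  measure_singleton z := by
    rw [conv, map_apply measurable_add (measurableSet_singleton z),
      prod_apply_symm (measurable_add (measurableSet_singleton z))]
    refine (lintegral_congr fun y ↦ Subsingleton.measure_zero ?_ μ).trans lintegral_zero
    exact fun x₁ hx₁ x₂ hx₂ ↦ add_right_cancel (hx₁.trans hx₂.symm)

theorem conv_conv_self_absolutelyContinuous {M : Type*} [AddCommMonoid M] [MeasurableSpace M]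
    [MeasurableAdd₂ M] {μ ν : Measure M} [SFinite μ] [SFinite ν] (hμ : μ ∗ μ ≪ μ)
    (hν : ν ∗ ν ≪ ν) : (μ ∗ ν) ∗ (μ ∗ ν) ≪ μ ∗ ν := by
  rw [conv_assoc, ← conv_assoc ν, conv_comm ν μ, conv_assoc, ← conv_assoc]
  exact hμ.conv hν

end MeasureTheory.Measure

open Measure

instance convPow.instIsFiniteMeasure (μ : Measure ℝ) [IsFiniteMeasure μ] :
    ∀ n, IsFiniteMeasure (convPow μ n)
  | 0 => inferInstanceAs (IsFiniteMeasure (dirac 0))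
  | n + 1 =>
    have := convPow.instIsFiniteMeasure μ n
    inferInstanceAs (IsFiniteMeasure (convPow μ n ∗ μ))

theorem convPow_succ_absolutelyContinuous {μ m : Measure ℝ} [IsFiniteMeasure μ] [SFinite m]
    (hμ : μ ≪ m) (hm : m ∗ m ≪ m) : ∀ n, convPow μ (n + 1) ≪ m
  | 0 => by simpa [convPow] using hμ
  | n + 1 => ((convPow_succ_absolutelyContinuous hμ hm n).conv hμ).trans hm

theorem exists_convPow_succ_singleton_pos {μ : Measure ℝ} [IsFiniteMeasure μ]
    [μ.IsNegInvariant] {a x : ℝ} (ha : 0 < μ {a})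
    (hx : x ∈ AddSubgroup.closure {y | 0 < μ {y}}) : ∃ n, 0 < convPow μ (n + 1) {x} := by
  have hneg : -{y | 0 < μ {y}} = {y | 0 < μ {y}} := by
    ext y
    simp [← neg_singleton, measure_neg]
  have hclosure : (AddSubgroup.closure {y | 0 < μ {y}}).toAddSubmonoid =
      AddSubmonoid.closure {y | 0 < μ {y}} := by
    rw [AddSubgroup.closure_toAddSubmonoid, hneg, union_self]
  have hmonoid : ∀ y ∈ AddSubmonoid.closure {y | 0 < μ {y}}, ∃ n, 0 < convPow μ n {y} := by
    intro y hy
    induction hy using AddSubmonoid.closure_induction_right with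
    | zero => exact ⟨0, by simp [convPow]⟩
    | add_right y _ z hz ih =>
      obtain ⟨n, hn⟩ := ih
      exact ⟨n + 1, (ENNReal.mul_pos hn.ne' (ne_of_gt hz)).trans_le
        (mul_le_conv_singleton_add _ _ y z)⟩
  -- writing `x = (x - a) + a` makes the exponent positive, also for `x = 0`
  obtain ⟨n, hn⟩ := hmonoid (x - a) <| by
    rw [← hclosure]
    exact (AddSubgroup.closure _).sub_mem hx (AddSubgroup.subset_closure ha)
  refine ⟨n, (ENNReal.mul_pos hn.ne' ha.ne').trans_le ?_⟩
  simpa [convPow] using mul_le_conv_singleton_add (convPow μ n) μ (x - a) a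

noncomputable def sumConvPow (μ : Measure ℝ) : Measure ℝ :=
  Measure.sum fun n ↦ convPow μ (n + 1)

theorem sumConvPow_apply_eq_zero_iff {μ : Measure ℝ} {U : Set ℝ} :
    sumConvPow μ U = 0 ↔ ∀ k, 1 ≤ k → convPow μ k U = 0 := by
  rw [sumConvPow, sum_apply_eq_zero]
  refine ⟨fun h k hk ↦ ?_, fun h n ↦ h (n + 1) n.succ_pos⟩
  obtain ⟨n, rfl⟩ := Nat.exists_eq_add_of_le' hk
  exact h n

theorem convPow_succ_absolutelyContinuous_sumConvPow (μ : Measure ℝ) (n : ℕ) :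
    convPow μ (n + 1) ≪ sumConvPow μ :=
  absolutelyContinuous_of_le (le_sum _ n)

section MeasureClass

variable {μ μc μa δ : Measure ℝ} [IsFiniteMeasure μ] [IsFiniteMeasure μc] [IsFiniteMeasure δ]

theorem sumConvPow_absolutelyContinuous_conv_add (hsum : μ = μc + μa) (hconv : μc ∗ μc ≪ μc)
    (hμa : μa ≪ δ) (hδ : δ ∗ δ ≪ δ) (hδ0 : δ {0} ≠ 0) : sumConvPow μ ≪ μc ∗ δ + δ := by
  have hμ : μ ≪ μc ∗ δ + δ :=
    hsum ▸ (absolutelyContinuous_conv_of_singleton_zero_ne_zero μc δ hδ0).add hμa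
  rw [← add_dirac_zero_conv] at hμ ⊢
  exact absolutelyContinuous_sum_left <| convPow_succ_absolutelyContinuous hμ
    (conv_conv_self_absolutelyContinuous (add_dirac_zero_conv_self_absolutelyContinuous hconv) hδ)

theorem conv_add_absolutelyContinuous_sumConvPow {S : Set ℝ} (hμc : μc ≤ μ) (hδ : δ Sᶜ = 0)
    (hS : ∀ x ∈ S, ∃ n, 0 < convPow μ (n + 1) {x}) : μc ∗ δ + δ ≪ sumConvPow μ := by
  rw [← add_dirac_zero_conv]
  refine conv_absolutelyContinuous_of_forall_conv_dirac hδ fun x hx ↦ ?_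
  obtain ⟨n, hn⟩ := hS x hx
  have hx : dirac x ≪ convPow μ (n + 1) := dirac_absolutelyContinuous_of_singleton_pos hn
  rw [add_dirac_zero_conv, conv_comm]
  exact ((hx.conv (absolutelyContinuous_of_le hμc)).trans
    (convPow_succ_absolutelyContinuous_sumConvPow μ (n + 1))).add_left
    (hx.trans (convPow_succ_absolutelyContinuous_sumConvPow μ n))

theorem sumConvPow_mutuallyAbsolutelyContinuous_conv_add [μ.IsNegInvariant]
    [NullSingletonClass μc] {Λ : AddSubgroup ℝ} (hsum : μ = μc + μa)
    (hatomic : μa {x | 0 < μa {x}}ᶜ = 0) (hconv : μc ∗ μc ≪ μc) (hμa : μa ≠ 0)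
    (hΛ : Λ = AddSubgroup.closure {x | 0 < μa {x}}) (hδΛ : ∀ x ∈ Λ, 0 < δ {x})
    (hδ : δ (Λ : Set ℝ)ᶜ = 0) : sumConvPow μ ≪ μc ∗ δ + δ ∧ μc ∗ δ + δ ≪ sumConvPow μ := by
  have hatoms : {x | 0 < μa {x}} = {x | 0 < μ {x}} := by
    simp [hsum, measure_singleton]
  obtain ⟨a, ha⟩ := exists_singleton_pos_of_ne_zero hμa hatomic
  refine ⟨sumConvPow_absolutelyContinuous_conv_add hsum hconv ?_ ?_ (hδΛ 0 Λ.zero_mem).ne',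
    conv_add_absolutelyContinuous_sumConvPow (hsum ▸ Measure.le_add_right le_rfl) hδ
      fun x hx ↦ ?_⟩
  · exact absolutelyContinuous_of_forall_singleton_pos hatomic fun x hx ↦
      hδΛ x (hΛ ▸ AddSubgroup.subset_closure hx)
  · exact conv_self_absolutelyContinuous_of_forall_singleton_pos Λ.toAddSubmonoid hδ hδΛ
  · rw [hΛ, hatoms] at hx
    exact exists_convPow_succ_singleton_pos (a := a) (by simpa [hsum, measure_singleton]) hx

end MeasureClass

theorem stmt12_general (μ μc μa ν νc νa : Measure ℝ)
    [IsFiniteMeasure μ] [IsFiniteMeasure μc]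
    [IsFiniteMeasure ν] [IsFiniteMeasure νc]
    (hμsum : μ = μc + μa) (hνsum : ν = νc + νa)
    (hμsym : μ.map (fun x : ℝ => -x) = μ) (hνsym : ν.map (fun x : ℝ => -x) = ν)
    (hμcont : ∀ x : ℝ, μc {x} = 0) (hνcont : ∀ x : ℝ, νc {x} = 0)
    (hμatomic : μa ({x : ℝ | 0 < μa {x}}ᶜ) = 0)
    (hνatomic : νa ({x : ℝ | 0 < νa {x}}ᶜ) = 0)
    (hμconv : μc.conv μc ≪ μc) (hνconv : νc.conv νc ≪ νc)
    (hμa : μa ≠ 0) (hνa : νa ≠ 0)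
    (Λμ Λν : AddSubgroup ℝ)
    (hΛμ : Λμ = AddSubgroup.closure {x : ℝ | 0 < μa {x}})
    (hΛν : Λν = AddSubgroup.closure {x : ℝ | 0 < νa {x}})
    (δμ δν : Measure ℝ) [IsFiniteMeasure δμ] [IsFiniteMeasure δν]
    (hδμatoms : ∀ x : ℝ, 0 < δμ {x} ↔ x ∈ Λμ) (hδμconc : δμ ((Λμ : Set ℝ)ᶜ) = 0)
    (hδνatoms : ∀ x : ℝ, 0 < δν {x} ↔ x ∈ Λν) (hδνconc : δν ((Λν : Set ℝ)ᶜ) = 0)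
    (hjoint : ∀ U : Set ℝ, MeasurableSet U →
      ((∀ k : ℕ, 1 ≤ k → convPow μ k U = 0) ↔ (∀ k : ℕ, 1 ≤ k → convPow ν k U = 0))) :
    Λμ = Λν ∧
    ∀ U : Set ℝ, MeasurableSet U → ((μc.conv δμ) U = 0 ↔ (νc.conv δν) U = 0) := by
  have : μ.IsNegInvariant := ⟨hμsym⟩
  have : ν.IsNegInvariant := ⟨hνsym⟩
  have : NullSingletonClass μc := ⟨hμcont⟩
  have : NullSingletonClass νc := ⟨hνcont⟩
  obtain ⟨hμm, hmμ⟩ := sumConvPow_mutuallyAbsolutelyContinuous_conv_add hμsum hμatomic hμconv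
    hμa hΛμ (fun x ↦ (hδμatoms x).2) hδμconc
  obtain ⟨hνm, hmν⟩ := sumConvPow_mutuallyAbsolutelyContinuous_conv_add hνsum hνatomic hνconv
    hνa hΛν (fun x ↦ (hδνatoms x).2) hδνconc
  have hμν : sumConvPow μ ≪ sumConvPow ν := .mk fun U hU h ↦
    sumConvPow_apply_eq_zero_iff.2 ((hjoint U hU).2 (sumConvPow_apply_eq_zero_iff.1 h))
  have hνμ : sumConvPow ν ≪ sumConvPow μ := .mk fun U hU h ↦
    sumConvPow_apply_eq_zero_iff.2 ((hjoint U hU).1 (sumConvPow_apply_eq_zero_iff.1 h))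
  have hδμ : δμ {x | 0 < δμ {x}}ᶜ = 0 := by simpa [hδμatoms] using hδμconc
  have hδν : δν {x | 0 < δν {x}}ᶜ = 0 := by simpa [hδνatoms] using hδνconc
  have h₁ := hmμ.trans (hμν.trans hνm)
  have h₂ := hmν.trans (hνμ.trans hμm)
  refine ⟨AddSubgroup.ext fun x ↦ ?_, fun U _ ↦
    ⟨fun h ↦ absolutelyContinuous_of_add_absolutelyContinuous_add hδμ h₂ h,
      fun h ↦ absolutelyContinuous_of_add_absolutelyContinuous_add hδν h₁ h⟩⟩
  rw [← hδμatoms, ← hδνatoms]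
  exact singleton_pos_iff_of_add_absolutelyContinuous_add h₁ h₂ x

theorem stmt12 (μ μc μa ν νc νa : Measure ℝ)
    [IsFiniteMeasure μ] [IsFiniteMeasure μc] [IsFiniteMeasure μa]
    [IsFiniteMeasure ν] [IsFiniteMeasure νc] [IsFiniteMeasure νa]
    (hμsum : μ = μc + μa) (hνsum : ν = νc + νa)
    (hμsym : μ.map (fun x : ℝ => -x) = μ) (hνsym : ν.map (fun x : ℝ => -x) = ν)
    (hμcont : ∀ x : ℝ, μc {x} = 0) (hνcont : ∀ x : ℝ, νc {x} = 0)
    (hμatomic : μa ({x : ℝ | 0 < μa {x}}ᶜ) = 0)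
    (hνatomic : νa ({x : ℝ | 0 < νa {x}}ᶜ) = 0)
    (hμconv : μc.conv μc ≪ μc) (hνconv : νc.conv νc ≪ νc)
    (hμa : μa ≠ 0) (hνa : νa ≠ 0)
    (Λμ Λν : AddSubgroup ℝ)
    (hΛμ : Λμ = AddSubgroup.closure {x : ℝ | 0 < μa {x}})
    (hΛν : Λν = AddSubgroup.closure {x : ℝ | 0 < νa {x}})
    (δμ δν : Measure ℝ) [IsFiniteMeasure δμ] [IsFiniteMeasure δν]
    (hδμatoms : ∀ x : ℝ, 0 < δμ {x} ↔ x ∈ Λμ) (hδμconc : δμ ((Λμ : Set ℝ)ᶜ) = 0)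
    (hδνatoms : ∀ x : ℝ, 0 < δν {x} ↔ x ∈ Λν) (hδνconc : δν ((Λν : Set ℝ)ᶜ) = 0)
    (hjoint : ∀ U : Set ℝ, MeasurableSet U →
      ((∀ k : ℕ, 1 ≤ k → convPow μ k U = 0) ↔ (∀ k : ℕ, 1 ≤ k → convPow ν k U = 0))) :
    Λμ = Λν ∧
    ∀ U : Set ℝ, MeasurableSet U → ((μc.conv δμ) U = 0 ↔ (νc.conv δν) U = 0) :=
  stmt12_general μ μc μa ν νc νa hμsum hνsum hμsym hνsym hμcont hνcont hμatomic hνatomic hμconv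
    hνconv hμa hνa Λμ Λν hΛμ hΛν δμ δν hδμatoms hδμconc hδνatoms hδνconc hjoint
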